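/- arXiv:2505.13118 — 2 statements merged into one kernel-verified Lean document; each statement's English description precedes it below -/
import Mathlib

section
/- The proportional Shapley random-order distribution is a probability mass function: if v({i}) > 0 for all i ∈ D = {1,...,d}, then Σ_{π ∈ S_D} Π_{j=2}^d [v({π_j}) / Σ_{k=1}^{j} v({π_k})] = 1, where the product is over positions j of the permutation π = (π_1,...,π_d). -/
/-!
Read from the back, `π` is a draw without replacement with probabilities proportional to the
weights `v {i}`: its last entry is `i` with probability `v {i} / ∑ v`, and given that, the earlier
entries form such a draw on the remaining players. Conditioning on the last entry and summing the
inner draws to `1` by induction leaves `∑ᵢ v {i} / ∑ v = 1`.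
-/

open Finset Equiv

namespace Equiv.Perm

variable {K : Type*} [Semifield K]

theorem prod_decomposeFin_symm_div_sum_Ici {n : ℕ} (w : Fin (n + 1) → K) (p : Fin (n + 1))
    (e : Perm (Fin n)) :
    ∏ j, w (decomposeFin.symm (p, e) j) / ∑ k ∈ Ici j, w (decomposeFin.symm (p, e) k) =
      w p / (∑ k, w k) *
        ∏ j, w (swap 0 p (e j).succ) / ∑ k ∈ Ici j, w (swap 0 p (e k).succ) := by
  rw [Fin.prod_univ_succ, decomposeFin_symm_apply_zero,
    show Ici (0 : Fin (n + 1)) = univ from Ici_bot, Equiv.sum_comp (decomposeFin.symm (p, e)) w]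
  simp only [Fin.sum_Ici_succ, decomposeFin_symm_apply_succ]

theorem sum_prod_div_sum_Ici_eq_one [LinearOrder K] [IsStrictOrderedRing K] :
    ∀ {n : ℕ} (w : Fin n → K), (∀ i, 0 < w i) →
      ∑ σ : Perm (Fin n), ∏ j, w (σ j) / ∑ k ∈ Ici j, w (σ k) = 1
  | 0, _, _ => by simp
  | n + 1, w, hw => by
    have ih (p : Fin (n + 1)) :=
      sum_prod_div_sum_Ici_eq_one (fun x => w (swap 0 p x.succ)) (fun _ => hw _)
    have hsum : ∑ k, w k ≠ 0 := (sum_pos (fun k _ => hw k) univ_nonempty).ne'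
    rw [← decomposeFin.symm.sum_comp, Fintype.sum_prod_type]
    simp only [prod_decomposeFin_symm_div_sum_Ici, ← mul_sum, ih, mul_one, ← sum_div,
      div_self hsum]

theorem sum_prod_div_sum_Iic_eq_one [LinearOrder K] [IsStrictOrderedRing K] {n : ℕ}
    (w : Fin n → K) (hw : ∀ i, 0 < w i) :
    ∑ σ : Perm (Fin n), ∏ j, w (σ j) / ∑ k ∈ Iic j, w (σ k) = 1 := by
  rw [← Equiv.sum_comp (Equiv.mulRight Fin.revPerm)]
  convert sum_prod_div_sum_Ici_eq_one w hw using 2 with σ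
  rw [← Equiv.prod_comp Fin.revPerm]
  refine prod_congr rfl fun j _ => ?_
  simp [← Fin.map_revPerm_Ici, sum_map]

end Equiv.Perm

/-- The proportional Shapley random-order distribution is a probability mass
function: if all singleton values are strictly positive, then
`∑_π ∏_{j=2}^d v {π j} / ∑_{k ≤ j} v {π k} = 1` over all `d!` permutations. -/
theorem proportional_shapley_random_order_is_pmf
    (d : ℕ) (v : Finset (Fin d) → ℝ)
    (hv : ∀ i : Fin d, 0 < v {i}) :
    ∑ π : Equiv.Perm (Fin d),
      ∏ j ∈ Finset.univ.filter (fun j : Fin d => (j : ℕ) ≠ 0),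
        v {π j} / ∑ k ∈ Finset.Iic j, v {π k} = 1 := by
  have first_factor_eq_one (π : Perm (Fin d)) (j : Fin d) (hj : (j : ℕ) = 0) :
      v {π j} / ∑ k ∈ Iic j, v {π k} = 1 := by
    have hIic : Iic j = {j} := by
      ext k
      simp only [mem_Iic, mem_singleton, Fin.le_def, Fin.ext_iff]
      omega
    rw [hIic, sum_singleton, div_self (hv _).ne']
  simp_rw [prod_filter_of_ne fun j _ h => mt (first_factor_eq_one _ j) h]
  exact Perm.sum_prod_div_sum_Iic_eq_one (fun i => v {i}) hv
end

section
/- Marginal coverage of split conformal prediction: if the conformity scores s(X_1,Y_1,f̂), ..., s(X_n,Y_n,f̂), s(X_{n+1},Y_{n+1},f̂) of the calibration points and the test point are exchangeable real random variables that are almost surely distinct, and Ĉ(X_{n+1}) = {y : s(X_{n+1}, y, f̂) ≤ q_{1-α}(S)} where q_{1-α}(S) is the ⌈(1-α)(n+1)⌉-th smallest calibration score, then 1 - α ≤ P(Y_{n+1} ∈ Ĉ(X_{n+1})) ≤ 1 - α + 1/(n+1). -/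
/-! The test score's rank `R = #{i | V i ≤ V last}` among all `n + 1` scores is uniform on
`{1, …, n + 1}`: by exchangeability every score has the same chance of rank `≤ k`, and when the
scores are distinct exactly `k` of them have it, so `P(R ≤ k) = k / (n + 1)`. The `k`-th smallest
calibration score is itself a calibration score, so the test score never ties with it and is
covered exactly when `R ≤ k`. Finally `k = ⌈(1 - α)(n + 1)⌉` puts `k / (n + 1)` in
`[1 - α, 1 - α + 1 / (n + 1)]`. -/

open MeasureTheory Finset

namespace SplitConformal

section Quantile

variable {ι α : Type*} [Fintype ι] [ConditionallyCompleteLinearOrder α]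

noncomputable def kthSmallest (w : ι → α) (k : ℕ) : α :=
  sInf {t | k ≤ #{i | w i ≤ t}}

lemma monotone_card_filter_le (w : ι → α) : Monotone fun t => #{i | w i ≤ t} :=
  fun _ _ hst => card_le_card <| monotone_filter_right _ fun _ _ hi => hi.trans hst

/-- Any `t` in the threshold set can be lowered to the largest score below `t` without changing
the count, so the set is the up-set of a score. -/
lemma exists_setOf_le_card_eq_Ici (w : ι → α) {k : ℕ} (hk1 : 1 ≤ k)
    (hk : k ≤ Fintype.card ι) : ∃ i, {t | k ≤ #{j | w j ≤ t}} = Set.Ici (w i) := by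
  have hι : (univ : Finset ι).Nonempty := card_pos.mp (by rw [card_univ]; omega)
  obtain ⟨imax, -, himax⟩ := exists_max_image univ w hι
  have hT : (univ.filter fun i => k ≤ #{j | w j ≤ w i}).Nonempty := by
    refine ⟨imax, mem_filter.mpr ⟨mem_univ _, ?_⟩⟩
    rwa [filter_true_of_mem fun j _ => himax j (mem_univ j), card_univ]
  obtain ⟨i₀, hi₀, hmin⟩ := exists_min_image _ w hT
  refine ⟨i₀, Set.ext fun t => ⟨fun ht => ?_, fun ht => ?_⟩⟩
  · have hne : (univ.filter fun j => w j ≤ t).Nonempty := card_pos.mp (hk1.trans ht)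
    obtain ⟨i, hi, hmax⟩ := exists_max_image _ w hne
    have hit : w i ≤ t := (mem_filter.mp hi).2
    have hcount : univ.filter (fun j => w j ≤ w i) = univ.filter fun j => w j ≤ t :=
      Finset.ext fun j => by
        simp only [mem_filter, mem_univ, true_and]
        exact ⟨fun h => h.trans hit, fun h => hmax j (mem_filter.mpr ⟨mem_univ _, h⟩)⟩
    exact (hmin i (mem_filter.mpr ⟨mem_univ _, hcount ▸ ht⟩)).trans hit
  · exact (mem_filter.mp hi₀).2.trans (monotone_card_filter_le w ht)

/-- Since the `k`-th smallest score is itself one of the scores, a value `x` outside the range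
never ties with it. -/
lemma le_kthSmallest_iff_card_lt (w : ι → α) {k : ℕ} (hk1 : 1 ≤ k)
    (hk : k ≤ Fintype.card ι) {x : α} (hx : x ∉ Set.range w) :
    x ≤ kthSmallest w k ↔ #{i | w i ≤ x} < k := by
  obtain ⟨i, hi⟩ := exists_setOf_le_card_eq_Ici w hk1 hk
  have hq : kthSmallest w k = w i := by rw [kthSmallest, hi, csInf_Ici]
  have hS : k ≤ #{j | w j ≤ x} ↔ w i ≤ x := Set.ext_iff.mp hi x
  rw [hq, ← not_le, hS, le_iff_lt_or_eq, lt_iff_not_ge, or_iff_left fun h => hx ⟨i, h.symm⟩]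

end Quantile

section Rank

variable {ι α : Type*} [Fintype ι] [LinearOrder α]

def rank (v : ι → α) (j : ι) : ℕ := #{i | v i ≤ v j}

lemma rank_lt_rank (v : ι → α) {i j : ι} (h : v i < v j) : rank v i < rank v j := by
  refine card_lt_card ⟨monotone_filter_right _ fun _ _ hl => hl.trans h.le, fun hsub => ?_⟩
  have : v j ≤ v i := (mem_filter.mp (hsub (mem_filter.mpr ⟨mem_univ j, le_rfl⟩))).2
  exact h.not_ge this

lemma rank_injective {v : ι → α} (hv : Function.Injective v) : Function.Injective (rank v) := by
  intro i j h
  by_contra hij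
  rcases (hv.ne hij).lt_or_gt with hlt | hlt
  · exact (rank_lt_rank v hlt).ne h
  · exact (rank_lt_rank v hlt).ne' h

lemma rank_mem_Icc (v : ι → α) (j : ι) : rank v j ∈ Icc 1 (Fintype.card ι) :=
  mem_Icc.mpr ⟨card_pos.mpr ⟨j, mem_filter.mpr ⟨mem_univ j, le_rfl⟩⟩, card_filter_le _ _⟩

lemma image_rank {v : ι → α} (hv : Function.Injective v) :
    univ.image (rank v) = Icc 1 (Fintype.card ι) :=
  eq_of_subset_of_card_le (fun _ hr => by
      obtain ⟨j, -, rfl⟩ := mem_image.mp hr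
      exact rank_mem_Icc v j)
    (by rw [Nat.card_Icc, card_image_of_injective _ (rank_injective hv), card_univ]; omega)

lemma card_filter_rank_le {v : ι → α} (hv : Function.Injective v) {k : ℕ}
    (hk : k ≤ Fintype.card ι) : #{j | rank v j ≤ k} = k := by
  have himage : (Icc 1 (Fintype.card ι)).filter (· ≤ k) = Icc 1 k := by
    ext r; simp only [mem_filter, mem_Icc]; omega
  rw [← card_image_of_injective _ (rank_injective hv), ← filter_image (p := (· ≤ k)),
    image_rank hv, himage, Nat.card_Icc, Nat.add_sub_cancel]

lemma rank_comp_perm (v : ι → α) (σ : Equiv.Perm ι) (j : ι) :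
    rank (v ∘ σ) j = rank v (σ j) :=
  card_equiv σ fun i => by simp

lemma rank_last {n : ℕ} (v : Fin (n + 1) → α) :
    rank v (Fin.last n) = #{i : Fin n | v i.castSucc ≤ v (Fin.last n)} + 1 := by
  simp only [rank, card_filter, Fin.sum_univ_castSucc, le_refl, if_true]

end Rank

section Exchangeable

variable {Ω ι α : Type*} [MeasurableSpace Ω] {μ : Measure Ω} [Fintype ι]
  [LinearOrder α] [TopologicalSpace α] [MeasurableSpace α] [OpensMeasurableSpace α]
  [OrderClosedTopology α] [SecondCountableTopology α]

lemma measurable_rank (j : ι) : Measurable fun v : ι → α => rank v j := by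
  simp only [rank, card_filter]
  exact Finset.measurable_sum _ fun i _ => Measurable.ite
    (measurableSet_le (measurable_pi_apply i) (measurable_pi_apply j)) measurable_const
    measurable_const

/-- Swapping `j` and `j'` maps the law of the scores to itself and the event for `j` to the
event for `j'`. -/
lemma measure_rank_le_eq [DecidableEq ι] {X : Ω → ι → α} (hX : Measurable X)
    (hexch : ∀ σ : Equiv.Perm ι, μ.map (fun ω i => X ω (σ i)) = μ.map X) (k : ℕ) (j j' : ι) :
    μ {ω | rank (X ω) j ≤ k} = μ {ω | rank (X ω) j' ≤ k} := by
  let σ := Equiv.swap j' j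
  have hB : MeasurableSet {v : ι → α | rank v j' ≤ k} := measurable_rank j' measurableSet_Iic
  have hXσ : Measurable fun ω i => X ω (σ i) := measurable_pi_lambda _ fun i => hX.eval
  have hpre : {ω | rank (X ω) j ≤ k} = (fun ω i => X ω (σ i)) ⁻¹' {v | rank v j' ≤ k} := by
    ext ω
    show rank (X ω) j ≤ k ↔ rank (X ω ∘ σ) j' ≤ k
    rw [rank_comp_perm, Equiv.swap_apply_left]
  rw [hpre, ← Measure.map_apply hXσ hB, hexch σ, Measure.map_apply hX hB]
  rfl

lemma sum_measure_rank_le {X : Ω → ι → α} (hX : Measurable X)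
    (hinj : ∀ᵐ ω ∂μ, Function.Injective (X ω)) {k : ℕ} (hk : k ≤ Fintype.card ι) :
    ∑ j, μ {ω | rank (X ω) j ≤ k} = k * μ Set.univ := by
  have hA : ∀ j, MeasurableSet {ω | rank (X ω) j ≤ k} :=
    fun j => (measurable_rank j).comp hX measurableSet_Iic
  calc ∑ j, μ {ω | rank (X ω) j ≤ k}
      = ∫⁻ ω, ∑ j, {ω | rank (X ω) j ≤ k}.indicator 1 ω ∂μ := by
        rw [lintegral_finsetSum _ fun j _ => measurable_one.indicator (hA j)]
        simp only [lintegral_indicator_one (hA _)]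
    _ = ∫⁻ _, (k : ENNReal) ∂μ := lintegral_congr_ae <| hinj.mono fun ω hω => by
        simp only [Set.indicator_apply, Set.mem_ofPred_eq, Pi.one_apply, sum_boole,
          card_filter_rank_le hω hk]
    _ = k * μ Set.univ := lintegral_const _

lemma measure_rank_le_eq_div [DecidableEq ι] [IsProbabilityMeasure μ] {X : Ω → ι → α}
    (hX : Measurable X)
    (hexch : ∀ σ : Equiv.Perm ι, μ.map (fun ω i => X ω (σ i)) = μ.map X)
    (hinj : ∀ᵐ ω ∂μ, Function.Injective (X ω)) {k : ℕ} (hk : k ≤ Fintype.card ι) (j : ι) :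
    μ {ω | rank (X ω) j ≤ k} = k / Fintype.card ι := by
  have hsum := sum_measure_rank_le hX hinj hk
  rw [sum_congr rfl fun j' _ => measure_rank_le_eq hX hexch k j' j, sum_const, card_univ,
    nsmul_eq_mul, measure_univ, mul_one] at hsum
  have : Nonempty ι := ⟨j⟩
  rw [ENNReal.eq_div_iff (by simp) (by simp), hsum]

end Exchangeable

lemma natCeil_mul_div_mem_Icc {x m : ℝ} (hx : 0 ≤ x) (hm : 0 < m) :
    (⌈x * m⌉₊ : ℝ) / m ∈ Set.Icc x (x + 1 / m) := by
  rw [Set.mem_Icc, le_div_iff₀ hm, div_le_iff₀ hm, add_mul, one_div_mul_cancel hm.ne']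
  exact ⟨Nat.le_ceil _, (Nat.ceil_lt_add_one (by positivity)).le⟩

end SplitConformal

open SplitConformal in
theorem split_conformal_marginal_coverage_general
    {Ω : Type*} [MeasurableSpace Ω] (μ : Measure Ω) [IsProbabilityMeasure μ]
    (n : ℕ) (α : ℝ) (hα1 : α < 1)
    (V : Fin (n + 1) → Ω → ℝ)
    (hmeas : ∀ i, Measurable (V i))
    (hexch : ∀ σ : Equiv.Perm (Fin (n + 1)),
      Measure.map (fun ω => fun i => V (σ i) ω) μ =
        Measure.map (fun ω => fun i => V i ω) μ)
    (hdist : ∀ᵐ ω ∂μ, ∀ i j : Fin (n + 1), i ≠ j → V i ω ≠ V j ω)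
    (k : ℕ) (hk : k = ⌈(1 - α) * (n + 1)⌉₊) (hkn : k ≤ n)
    (q : Ω → ℝ)
    (hq : ∀ ω, q ω = sInf {t : ℝ |
      k ≤ (Finset.univ.filter (fun i : Fin n => V i.castSucc ω ≤ t)).card}) :
    1 - α ≤ (μ {ω | V (Fin.last n) ω ≤ q ω}).toReal ∧
      (μ {ω | V (Fin.last n) ω ≤ q ω}).toReal ≤ 1 - α + 1 / (n + 1) := by
  let X : Ω → Fin (n + 1) → ℝ := fun ω i => V i ω
  have hX : Measurable X := measurable_pi_lambda _ hmeas
  have hinj : ∀ᵐ ω ∂μ, Function.Injective (X ω) :=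
    hdist.mono fun ω h i j => not_imp_not.mp (h i j)
  have hk1 : 1 ≤ k := hk ▸ Nat.one_le_ceil_iff.mpr (by nlinarith)
  have hevent : {ω | V (Fin.last n) ω ≤ q ω} =ᵐ[μ] {ω | rank (X ω) (Fin.last n) ≤ k} := by
    filter_upwards [hinj] with ω hω
    have htest : X ω (Fin.last n) ∉ Set.range fun i : Fin n => X ω i.castSucc :=
      fun ⟨i, hi⟩ => (Fin.castSucc_lt_last i).ne (hω hi)
    show (V (Fin.last n) ω ≤ q ω) = (rank (X ω) (Fin.last n) ≤ k)
    rw [hq, rank_last]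
    exact propext <|
      (le_kthSmallest_iff_card_lt _ hk1 (by simpa using hkn) htest).trans Nat.lt_iff_add_one_le
  have hcov : (μ {ω | V (Fin.last n) ω ≤ q ω}).toReal = k / (n + 1) := by
    rw [measure_congr hevent, measure_rank_le_eq_div hX hexch hinj (by simp; omega),
      Fintype.card_fin, ENNReal.toReal_div, ENNReal.toReal_natCast, ENNReal.toReal_natCast,
      Nat.cast_succ]
  rw [hcov, hk]
  exact natCeil_mul_div_mem_Icc (by linarith) (by positivity)

/-- Marginal coverage of split conformal prediction: if the scores
`V 0, …, V n` (the first `n` being calibration scores and `V (last n)` the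
test score) are exchangeable and almost surely distinct, and the threshold
`q ω` is the `k`-th smallest calibration score with `k = ⌈(1-α)(n+1)⌉`, then
the coverage probability `P(V_{n+1} ≤ q)` lies in
`[1 - α, 1 - α + 1/(n+1)]`. The `k`-th smallest value is expressed as
`sInf {t | k ≤ #{i : V i ≤ t}}`. -/
theorem split_conformal_marginal_coverage
    {Ω : Type*} [MeasurableSpace Ω] (μ : Measure Ω) [IsProbabilityMeasure μ]
    (n : ℕ) (α : ℝ) (hα : 0 < α) (hα1 : α < 1)
    (V : Fin (n + 1) → Ω → ℝ)
    (hmeas : ∀ i, Measurable (V i))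
    (hexch : ∀ σ : Equiv.Perm (Fin (n + 1)),
      Measure.map (fun ω => fun i => V (σ i) ω) μ =
        Measure.map (fun ω => fun i => V i ω) μ)
    (hdist : ∀ᵐ ω ∂μ, ∀ i j : Fin (n + 1), i ≠ j → V i ω ≠ V j ω)
    (k : ℕ) (hk : k = ⌈(1 - α) * (n + 1)⌉₊) (hkn : k ≤ n)
    (q : Ω → ℝ)
    (hq : ∀ ω, q ω = sInf {t : ℝ |
      k ≤ (Finset.univ.filter (fun i : Fin n => V i.castSucc ω ≤ t)).card}) :
    1 - α ≤ (μ {ω | V (Fin.last n) ω ≤ q ω}).toReal ∧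
      (μ {ω | V (Fin.last n) ω ≤ q ω}).toReal ≤ 1 - α + 1 / (n + 1) :=
  split_conformal_marginal_coverage_general μ n α hα1 V hmeas hexch hdist k hk hkn q hq
end
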